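/- Let p = [b_1^{a_1} ⋯ b_r^{a_r}] (b_1 ≥ ⋯ ≥ b_r) be an orthogonal partition of 2n+1 with a_r = b_r = 1 and with b_i even for all 1 ≤ i ≤ r−1. Then n* = 0, and with P := [p_1 p_1 (2n*)] = [p_1 p_1] one has the exact identity P^t = p^-; in particular (P^t)_{Sp_{2n}} = (p^-)_{Sp_{2n}}. -/

import Mathlib

/-!
Removing the single part `1` from `p` leaves a partition `q` with only even parts, and `p^- = q`.
Halving the parts of `q` gives `Q` with `p₁ = Qᵗ`; doubling every row of a diagram doubles each of
its columns, so `[p₁ p₁] = (2Q)ᵗ = qᵗ` and `[p₁ p₁]ᵗ = q`. The statement about collapses is the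
uniqueness of a maximum in the dominance order, which is antisymmetric because
`topSum p (m + 1) - topSum p m` is the `(m + 1)`-th part of `pᵗ`, and `pᵗ` determines `p`.
-/

namespace JiangWF

/-- `sCount p i` : the number of parts of `p` that are `≥ i`. -/
def sCount (p : Multiset ℕ) (i : ℕ) : ℕ := (p.filter (fun a => i ≤ a)).card

/-- `rCount p i` : the number of parts of `p` equal to `i`. -/
def rCount (p : Multiset ℕ) (i : ℕ) : ℕ := p.count i

/-- The largest part of `p` (`0` for the empty partition). -/
def maxPart (p : Multiset ℕ) : ℕ := p.sup

/-- The smallest part of `p` (`0` for the empty partition). -/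
noncomputable def minPart (p : Multiset ℕ) : ℕ := sInf {a : ℕ | a ∈ p}

/-- The transpose partition: its `i`-th part is `sCount p i`, for `1 ≤ i ≤ maxPart p`. -/
def transpose (p : Multiset ℕ) : Multiset ℕ :=
  (Multiset.range (maxPart p)).map fun i => sCount p (i + 1)

/-- The sum of the `m` largest parts of `p`. -/
def topSum (p : Multiset ℕ) (m : ℕ) : ℕ :=
  ∑ i ∈ Finset.Icc 1 p.sum, min m (sCount p i)

/-- Dominance order: `domLE p q` means `p ≤ q`. -/
def domLE (p q : Multiset ℕ) : Prop := ∀ m, topSum p m ≤ topSum q m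

/-- `p` is a partition of `N`: all parts positive, summing to `N`. -/
def IsPartitionOf (p : Multiset ℕ) (N : ℕ) : Prop := (∀ a ∈ p, 0 < a) ∧ p.sum = N

/-- Symplectic partition: every odd part occurs with even multiplicity. -/
def IsSymplectic (p : Multiset ℕ) : Prop := ∀ a, a % 2 = 1 → Even (p.count a)

/-- Orthogonal partition: every even part occurs with even multiplicity. -/
def IsOrthogonal (p : Multiset ℕ) : Prop := ∀ a, a % 2 = 0 → Even (p.count a)

/-- `p^-`: decrease the smallest part by one (deleting it if it becomes `0`). -/
noncomputable def pMinus (p : Multiset ℕ) : Multiset ℕ :=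
  if minPart p ≤ 1 then p.erase (minPart p)
  else (minPart p - 1) ::ₘ p.erase (minPart p)

/-- `p^+`: increase the largest part by one. -/
def pPlus (p : Multiset ℕ) : Multiset ℕ := (maxPart p + 1) ::ₘ p.erase (maxPart p)

/-- `p^{+-}`: increase the largest part by one and decrease the smallest by one. -/
noncomputable def pPM (p : Multiset ℕ) : Multiset ℕ := pMinus (pPlus p)

/-- `p₁ = [⌊b_1/2⌋^{a_1} ⋯ ⌊b_r/2⌋^{a_r}]^t` (discarding zero entries before transposing). -/
def pOne (p : Multiset ℕ) : Multiset ℕ :=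
  transpose ((p.map fun b => b / 2).filter fun x => 0 < x)

/-- `Σ_{i : b_i odd} a_i`: the number of odd parts of `p`. -/
def oddMult (p : Multiset ℕ) : ℕ := (p.filter fun a => a % 2 = 1).card

/-- `n* = ⌊(Σ_{i : b_i odd} a_i)/2⌋`. -/
def nStar (p : Multiset ℕ) : ℕ := oddMult p / 2

/-- Append an extra part `m` to `q`, omitted if `m = 0`. -/
def addPart (m : ℕ) (q : Multiset ℕ) : Multiset ℕ := if m = 0 then q else m ::ₘ q

/-- `c` is the `Sp`-collapse of `p`: the maximal symplectic partition `≤ p` in dominance. -/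
def IsSpCollapse (p c : Multiset ℕ) : Prop :=
  IsPartitionOf c p.sum ∧ IsSymplectic c ∧ domLE c p ∧
    ∀ c', IsPartitionOf c' p.sum → IsSymplectic c' → domLE c' p → domLE c' c

/-- `c` is the `SO`-collapse of `p`: the maximal orthogonal partition `≤ p` in dominance. -/
def IsSOCollapse (p c : Multiset ℕ) : Prop :=
  IsPartitionOf c p.sum ∧ IsOrthogonal c ∧ domLE c p ∧
    ∀ c', IsPartitionOf c' p.sum → IsOrthogonal c' → domLE c' p → domLE c' c

/-- `e` is the `Sp`-expansion of `p`: the minimal special symplectic partition `≥ p`. -/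
def IsSpExpansion (p e : Multiset ℕ) : Prop :=
  IsPartitionOf e p.sum ∧ IsSymplectic e ∧ IsSymplectic (transpose e) ∧ domLE p e ∧
    ∀ e', IsPartitionOf e' p.sum → IsSymplectic e' → IsSymplectic (transpose e') →
      domLE p e' → domLE e e'

/-- `e` is the `SO_{2n+1}`-expansion of `p`: the minimal special orthogonal partition `≥ p`
(odd case: special means the transpose is orthogonal). -/
def IsSOOddExpansion (p e : Multiset ℕ) : Prop :=
  IsPartitionOf e p.sum ∧ IsOrthogonal e ∧ IsOrthogonal (transpose e) ∧ domLE p e ∧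
    ∀ e', IsPartitionOf e' p.sum → IsOrthogonal e' → IsOrthogonal (transpose e') →
      domLE p e' → domLE e e'

/-- `e` is the `SO_{2n}`-expansion of `p`: the minimal special orthogonal partition `≥ p`
(even case: special means the transpose is symplectic). -/
def IsSOEvenExpansion (p e : Multiset ℕ) : Prop :=
  IsPartitionOf e p.sum ∧ IsOrthogonal e ∧ IsSymplectic (transpose e) ∧ domLE p e ∧
    ∀ e', IsPartitionOf e' p.sum → IsOrthogonal e' → IsSymplectic (transpose e') →
      domLE p e' → domLE e e'

/-- `dim_C(q)` for a symplectic partition `q` of `2k`: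
`2k² + k − (1/2)Σ s_i(q)² − (1/2)Σ_{i odd} r_i(q)` (note `2k² + k = (|q|² + |q|)/2`). -/
def dimC (p : Multiset ℕ) : ℚ :=
  ((p.sum : ℚ) ^ 2 + (p.sum : ℚ)) / 2
    - (∑ i ∈ Finset.Icc 1 p.sum, (sCount p i : ℚ) ^ 2) / 2
    - (∑ i ∈ Finset.Icc 1 p.sum, if i % 2 = 1 then (rCount p i : ℚ) else 0) / 2

/-- `dim_B(q)` for an orthogonal partition `q` of `2k+1`:
`2k² + k − (1/2)Σ s_i(q)² + (1/2)Σ_{i odd} r_i(q)` (note `2k² + k = (|q|² − |q|)/2`). -/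
def dimB (p : Multiset ℕ) : ℚ :=
  ((p.sum : ℚ) ^ 2 - (p.sum : ℚ)) / 2
    - (∑ i ∈ Finset.Icc 1 p.sum, (sCount p i : ℚ) ^ 2) / 2
    + (∑ i ∈ Finset.Icc 1 p.sum, if i % 2 = 1 then (rCount p i : ℚ) else 0) / 2

/-- `dim_D(q)` for an orthogonal partition `q` of `2k`:
`2k² − k − (1/2)Σ s_i(q)² + (1/2)Σ_{i odd} r_i(q)` (note `2k² − k = (|q|² − |q|)/2`). -/
def dimD (p : Multiset ℕ) : ℚ :=
  ((p.sum : ℚ) ^ 2 - (p.sum : ℚ)) / 2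
    - (∑ i ∈ Finset.Icc 1 p.sum, (sCount p i : ℚ) ^ 2) / 2
    + (∑ i ∈ Finset.Icc 1 p.sum, if i % 2 = 1 then (rCount p i : ℚ) else 0) / 2

lemma sCount_cons (a : ℕ) (p : Multiset ℕ) (i : ℕ) :
    sCount (a ::ₘ p) i = (if i ≤ a then 1 else 0) + sCount p i := by
  simp only [sCount, Multiset.filter_cons]
  split_ifs <;> simp [add_comm]

lemma sCount_antitone (p : Multiset ℕ) : Antitone (sCount p) := fun _ _ hij =>
  Multiset.card_le_card (Multiset.monotone_filter_right _ fun _ h => hij.trans h)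

lemma sCount_eq_count_add (p : Multiset ℕ) (a : ℕ) :
    sCount p a = p.count a + sCount p (a + 1) := by
  induction p using Multiset.induction with
  | empty => simp [sCount]
  | cons b s ih =>
    rw [sCount_cons, sCount_cons, Multiset.count_cons, ih]
    split_ifs <;> omega

lemma one_le_sCount_iff (p : Multiset ℕ) {k : ℕ} (hk : 1 ≤ k) :
    1 ≤ sCount p k ↔ k ≤ maxPart p := by
  induction p using Multiset.induction with
  | empty => simp [sCount, maxPart]; omega
  | cons a s ih =>
    rw [sCount_cons, maxPart, Multiset.sup_cons, ← maxPart]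
    simp only [le_sup_iff]
    split_ifs <;> omega

lemma eq_of_sCount_eq {p q : Multiset ℕ} (hp : ∀ a ∈ p, 0 < a) (hq : ∀ a ∈ q, 0 < a)
    (h : ∀ i, 1 ≤ i → sCount p i = sCount q i) : p = q := by
  ext a
  rcases Nat.eq_zero_or_pos a with rfl | ha
  · rw [Multiset.count_eq_zero.2 fun h => (hp 0 h).false,
      Multiset.count_eq_zero.2 fun h => (hq 0 h).false]
  · have := h a ha
    have := h (a + 1) (by omega)
    have := sCount_eq_count_add p a
    have := sCount_eq_count_add q a
    omega

lemma mem_iff_lt_card_of_downClosed {S : Finset ℕ} (hS : ∀ ⦃a b⦄, a ≤ b → b ∈ S → a ∈ S)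
    (j : ℕ) : j ∈ S ↔ j < S.card := by
  constructor
  · intro hj
    simpa using Finset.card_le_card fun i hi => hS (Nat.lt_succ_iff.1 (Finset.mem_range.1 hi)) hj
  · intro hj
    by_contra hjS
    have : S ⊆ Finset.range j := fun l hl =>
      Finset.mem_range.2 (lt_of_not_ge fun hjl => hjS (hS hjl hl))
    exact absurd hj (not_lt.2 (by simpa using Finset.card_le_card this))

lemma card_transpose (X : Multiset ℕ) : (transpose X).card = maxPart X := by
  simp [transpose]

lemma sCount_transpose (X : Multiset ℕ) (i : ℕ) :
    sCount (transpose X) i =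
      ((Finset.range (maxPart X)).filter fun j => i ≤ sCount X (j + 1)).card := by
  simp only [sCount, transpose, Multiset.filter_map, Multiset.card_map]
  rfl

lemma le_sCount_transpose_iff (X : Multiset ℕ) {i k : ℕ} (hi : 1 ≤ i) (hk : 1 ≤ k) :
    k ≤ sCount (transpose X) i ↔ i ≤ sCount X k := by
  obtain ⟨k, rfl⟩ : ∃ k', k = k' + 1 := ⟨k - 1, by omega⟩
  -- the indices `j` with `i ≤ sCount X (j + 1)` form an initial segment, since `sCount X` is antitone
  rw [sCount_transpose, Nat.succ_le_iff, ← mem_iff_lt_card_of_downClosed, Finset.mem_filter,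
    Finset.mem_range]
  · refine ⟨And.right, fun h => ⟨?_, h⟩⟩
    exact (one_le_sCount_iff X hk).1 (hi.trans h)
  · intro a b hab hb
    rw [Finset.mem_filter, Finset.mem_range] at hb ⊢
    exact ⟨by omega, hb.2.trans (sCount_antitone X (by omega))⟩

lemma transpose_pos (X : Multiset ℕ) : ∀ a ∈ transpose X, 0 < a := by
  simp only [transpose, Multiset.mem_map, Multiset.mem_range]
  rintro _ ⟨j, hj, rfl⟩
  exact (one_le_sCount_iff X (by omega)).2 (by omega)

lemma transpose_transpose (X : Multiset ℕ) (hX : ∀ a ∈ X, 0 < a) :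
    transpose (transpose X) = X := by
  refine eq_of_sCount_eq (transpose_pos _) hX fun i hi => ?_
  have key (k : ℕ) (hk : 1 ≤ k) : k ≤ sCount (transpose (transpose X)) i ↔ k ≤ sCount X i :=
    (le_sCount_transpose_iff _ hi hk).trans (le_sCount_transpose_iff X hk hi)
  have := key (sCount (transpose (transpose X)) i)
  have := key (sCount X i)
  omega

lemma maxPart_map_two_mul (Q : Multiset ℕ) : maxPart (Q.map (2 * ·)) = 2 * maxPart Q := by
  induction Q using Multiset.induction with
  | empty => simp [maxPart]
  | cons b s ih =>
    simp only [maxPart, Multiset.map_cons, Multiset.sup_cons] at ih ⊢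
    rw [ih]
    omega

lemma sCount_map_two_mul (Q : Multiset ℕ) (i : ℕ) :
    sCount (Q.map (2 * ·)) i = sCount Q ((i + 1) / 2) := by
  simp only [sCount, Multiset.filter_map, Multiset.card_map]
  congr 1
  exact Multiset.filter_congr fun a _ => by simp only [Function.comp]; omega

lemma range_two_mul (M : ℕ) :
    Multiset.range (2 * M) =
      (Multiset.range M).map (2 * ·) + (Multiset.range M).map (2 * · + 1) := by
  induction M with
  | zero => simp
  | succ M ih =>
    rw [show 2 * (M + 1) = 2 * M + 1 + 1 by ring, Multiset.range_succ, Multiset.range_succ, ih,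
      Multiset.range_succ]
    simp only [Multiset.map_cons, Multiset.cons_add, Multiset.add_cons]

lemma transpose_map_two_mul (Q : Multiset ℕ) :
    transpose (Q.map (2 * ·)) = transpose Q + transpose Q := by
  rw [transpose, maxPart_map_two_mul, range_two_mul, Multiset.map_add, Multiset.map_map,
    Multiset.map_map]
  congr 1 <;>
  · refine Multiset.map_congr rfl fun j _ => ?_
    simp only [Function.comp, sCount_map_two_mul]
    congr 1
    omega

lemma maxPart_le_sum (p : Multiset ℕ) : maxPart p ≤ p.sum :=
  Multiset.sup_le.2 fun _ ha => Multiset.le_sum_of_mem ha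

lemma filter_le_sCount_eq_Icc {p : Multiset ℕ} (hp : ∀ a ∈ p, 0 < a) {m : ℕ} (hm : 1 ≤ m) :
    (Finset.Icc 1 p.sum).filter (fun i => m ≤ sCount p i) =
      Finset.Icc 1 (sCount (transpose p) m) := by
  have hbound : sCount (transpose p) m ≤ p.sum :=
    (Multiset.card_le_card (Multiset.filter_le _ _)).trans
      ((card_transpose p).trans_le (maxPart_le_sum p))
  ext i
  simp only [Finset.mem_filter, Finset.mem_Icc]
  constructor
  · rintro ⟨⟨hi, -⟩, h⟩
    exact ⟨hi, (le_sCount_transpose_iff (transpose p) hi hm).1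
      ((transpose_transpose p hp).symm ▸ h)⟩
  · rintro ⟨hi, h⟩
    refine ⟨⟨hi, h.trans hbound⟩, ?_⟩
    simpa [transpose_transpose p hp] using (le_sCount_transpose_iff (transpose p) hi hm).2 h

lemma topSum_succ {p : Multiset ℕ} (hp : ∀ a ∈ p, 0 < a) (m : ℕ) :
    topSum p (m + 1) = topSum p m + sCount (transpose p) (m + 1) := by
  have hcard : ((Finset.Icc 1 p.sum).filter fun i => m + 1 ≤ sCount p i).card
      = sCount (transpose p) (m + 1) := by
    rw [filter_le_sCount_eq_Icc hp (by omega), Nat.card_Icc, Nat.add_sub_cancel]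
  rw [← hcard, topSum, topSum, Finset.card_filter, ← Finset.sum_add_distrib]
  exact Finset.sum_congr rfl fun i _ => by split_ifs <;> omega

lemma domLE_antisymm {p q : Multiset ℕ} (hp : ∀ a ∈ p, 0 < a) (hq : ∀ a ∈ q, 0 < a)
    (hpq : domLE p q) (hqp : domLE q p) : p = q := by
  have htop (m : ℕ) : topSum p m = topSum q m := le_antisymm (hpq m) (hqp m)
  have hcols : transpose p = transpose q := by
    refine eq_of_sCount_eq (transpose_pos p) (transpose_pos q) fun i hi => ?_
    obtain ⟨m, rfl⟩ : ∃ m, i = m + 1 := ⟨i - 1, by omega⟩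
    have := topSum_succ hp m
    have := topSum_succ hq m
    have := htop m
    have := htop (m + 1)
    omega
  rw [← transpose_transpose p hp, hcols, transpose_transpose q hq]

lemma IsSpCollapse.unique {P c₁ c₂ : Multiset ℕ} (h₁ : IsSpCollapse P c₁) (h₂ : IsSpCollapse P c₂) :
    c₁ = c₂ :=
  domLE_antisymm h₁.1.1 h₂.1.1 (h₂.2.2.2 c₁ h₁.1 h₁.2.1 h₁.2.2.1) (h₁.2.2.2 c₂ h₂.1 h₂.2.1 h₂.2.2.1)

lemma minPart_cons_one {q : Multiset ℕ} (hq : ∀ a ∈ q, 0 < a) : minPart (1 ::ₘ q) = 1 := by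
  have hmem : minPart (1 ::ₘ q) ∈ 1 ::ₘ q :=
    Nat.sInf_mem (s := {a | a ∈ 1 ::ₘ q}) ⟨1, Multiset.mem_cons_self 1 q⟩
  have hle : minPart (1 ::ₘ q) ≤ 1 := Nat.sInf_le (Multiset.mem_cons_self 1 q)
  rcases Multiset.mem_cons.1 hmem with h | h
  · exact h
  · have := hq _ h
    omega

lemma pMinus_cons_one {q : Multiset ℕ} (hq : ∀ a ∈ q, 0 < a) : pMinus (1 ::ₘ q) = q := by
  rw [pMinus, minPart_cons_one hq, if_pos le_rfl, Multiset.erase_cons_head]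

lemma nStar_cons_one {q : Multiset ℕ} (hq : ∀ a ∈ q, a % 2 = 0) : nStar (1 ::ₘ q) = 0 := by
  have hodd : q.filter (fun a => a % 2 = 1) = 0 :=
    Multiset.filter_eq_nil.2 fun a ha => by have := hq a ha; omega
  simp [nStar, oddMult, hodd]

lemma pOne_cons_one {q : Multiset ℕ} (hq : ∀ a ∈ q, 0 < a ∧ a % 2 = 0) :
    pOne (1 ::ₘ q) = transpose (q.map (· / 2)) := by
  rw [pOne, Multiset.map_cons, Multiset.filter_cons_of_neg _ (by norm_num),
    Multiset.filter_eq_self.2]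
  simp only [Multiset.mem_map]
  rintro _ ⟨b, hb, rfl⟩
  have := hq b hb
  omega

lemma transpose_pOne_add_pOne_cons_one {q : Multiset ℕ} (hq : ∀ a ∈ q, 0 < a ∧ a % 2 = 0) :
    transpose (pOne (1 ::ₘ q) + pOne (1 ::ₘ q)) = q := by
  have hhalve : (q.map (· / 2)).map (2 * ·) = q := by
    rw [Multiset.map_map]
    refine (Multiset.map_congr rfl fun b hb => ?_).trans (Multiset.map_id q)
    have := hq b hb
    simp only [Function.comp, id]
    omega
  rw [pOne_cons_one hq, ← transpose_map_two_mul, hhalve,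
    transpose_transpose q fun a ha => (hq a ha).1]

theorem transpose_eq_pMinus_of_even_parts_general (n : ℕ) (p : Multiset ℕ)
    (hp : IsPartitionOf p (2 * n + 1))
    (h1 : p.count 1 = 1) (heven : ∀ a ∈ p, a ≠ 1 → a % 2 = 0) :
    nStar p = 0 ∧ transpose (pOne p + pOne p) = pMinus p ∧
      ∀ c₁ c₂ : Multiset ℕ, IsSpCollapse (transpose (pOne p + pOne p)) c₁ →
        IsSpCollapse (pMinus p) c₂ → c₁ = c₂ := by
  obtain ⟨q, rfl⟩ : ∃ q, p = 1 ::ₘ q :=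
    ⟨p.erase 1, (Multiset.cons_erase (Multiset.count_pos.1 (by omega))).symm⟩
  have h1q : 1 ∉ q := by simpa using h1
  have hq (a : ℕ) (ha : a ∈ q) : 0 < a ∧ a % 2 = 0 :=
    ⟨hp.1 a (Multiset.mem_cons_of_mem ha),
      heven a (Multiset.mem_cons_of_mem ha) fun h => h1q (h ▸ ha)⟩
  have hP : transpose (pOne (1 ::ₘ q) + pOne (1 ::ₘ q)) = pMinus (1 ::ₘ q) :=
    (transpose_pOne_add_pOne_cons_one hq).trans (pMinus_cons_one fun a ha => (hq a ha).1).symm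
  exact ⟨nStar_cons_one fun a ha => (hq a ha).2, hP, fun _ _ h₁ h₂ => h₁.unique (hP ▸ h₂)⟩

/-- `p` an orthogonal partition of `2n+1` with `a_r = b_r = 1` (the smallest part
is `1` and occurs once) and all other parts even.  Then `n* = 0`, `P = [p₁ p₁]` satisfies
`P^t = p^-`, and in particular `(P^t)_{Sp_{2n}} = (p^-)_{Sp_{2n}}`. -/
theorem transpose_eq_pMinus_of_even_parts (n : ℕ) (p : Multiset ℕ)
    (hp : IsPartitionOf p (2 * n + 1)) (horth : IsOrthogonal p)
    (h1 : p.count 1 = 1) (heven : ∀ a ∈ p, a ≠ 1 → a % 2 = 0) :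
    nStar p = 0 ∧ transpose (pOne p + pOne p) = pMinus p ∧
      ∀ c₁ c₂ : Multiset ℕ, IsSpCollapse (transpose (pOne p + pOne p)) c₁ →
        IsSpCollapse (pMinus p) c₂ → c₁ = c₂ :=
  transpose_eq_pMinus_of_even_parts_general n p hp h1 heven

end JiangWF
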